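/- arXiv:1304.4778 — 2 statements merged into one kernel-verified Lean document; each statement's English description precedes it below -/
import Mathlib

section
/- Fix m ∈ ℕ, z ∈ (0,1), and a, b ∈ (0,1) with √a ≤ 1 − √(1−b). Let (f_n) be the polar iterates of f(ζ) = ζ(1−ζ) and (g_n) the polar iterates of g(ζ) = (ζ(1−ζ))^{2/3}. Suppose A ≥ 0 satisfies A·f_m(ζ) ≤ f_{m+1}(ζ) for all ζ ∈ (0,1), and B ≥ 0 satisfies g_{m+1}(ζ) ≤ B·g_m(ζ) for all ζ ∈ (0,1). Then there exist constants C₁, C₂, D > 0 such that for all integers n ≥ max(m,1): D·n^{−C₁}·A^n ≤ 2^{−n} + Pr(Z_n ∈ [a,b]) and Pr(Z_n ∈ [a,b]) ≤ C₂·B^n, where (Z_n) is the BEC Bhattacharyya process started at z. (Equivalently: log₂ A + O((log n)/n) ≤ (1/n)·log₂(2^{−n} + Pr(Z_n ∈ [a,b])), and (1/n)·log₂ Pr(Z_n ∈ [a,b]) ≤ log₂ B + O(1/n).) -/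
/-!
`Pr(Z_n ∈ [a, b])` is the `n`-th polar iterate `J_n(z)` of the indicator of `[a, b]`, and polar
iteration is linear and monotone on `(0, 1)`; both bounds compare `J_n` with iterated test
functions.

Upper bound: on `[a, b]` the indicator is at most `g / κ` with `κ = min_{[a, b]} g`, and
`g_{m+k} ≤ B^k g_m`.

Lower bound: the policy "apply `t₀` at or below `c = 1 - √(1 - b)`, `t₁` above" keeps `[a, b]`
invariant and steers every point of `(0, 1)` into it, so `J_n ≥ 2^{-n}` at points it steers in
within `n` steps. On those points `2^{-N} A^n f_m ≤ J_n` by induction on `n ≥ N`: averaging over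
both children is `A f_m ≤ f_{m+1}`; if one child cannot be steered in time, the point lies
exponentially close to `0` or `1`, where `f_m(t₀ x) ≈ 2x` and `A ≤ 1 - f_m(1/2)` let the other
child carry the bound alone. The summand `2^{-n}` absorbs the finitely many `n < N`.
-/

open MeasureTheory Filter Topology

noncomputable def becT (b : Bool) (x : ℝ) : ℝ := if b then x ^ 2 else 2 * x - x ^ 2

noncomputable def becZ (z : ℝ) : ℕ → (ℕ → Bool) → ℝ
  | 0, _ => z
  | n + 1, ω => becT (ω n) (becZ z n ω)

def IsBernoulliHalf (μ : Measure (ℕ → Bool)) : Prop :=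
  ∀ (n : ℕ) (b : Fin n → Bool), μ {ω | ∀ i : Fin n, ω i = b i} = (2 : ENNReal)⁻¹ ^ n

noncomputable def polarIter (f : ℝ → ℝ) : ℕ → ℝ → ℝ
  | 0 => f
  | n + 1 => fun z => (polarIter f n (z ^ 2) + polarIter f n (1 - (1 - z) ^ 2)) / 2

open Set

theorem sq_mem_Ioo_zero_one {x : ℝ} (hx : x ∈ Ioo (0 : ℝ) 1) : x ^ 2 ∈ Ioo (0 : ℝ) 1 := by
  obtain ⟨h0, h1⟩ := hx
  constructor <;> nlinarith

theorem one_sub_one_sub_sq_mem_Ioo_zero_one {x : ℝ} (hx : x ∈ Ioo (0 : ℝ) 1) :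
    1 - (1 - x) ^ 2 ∈ Ioo (0 : ℝ) 1 := by
  obtain ⟨h0, h1⟩ := hx
  constructor <;> nlinarith

section PolarIter

variable {f g : ℝ → ℝ}

theorem polarIter_succ (f : ℝ → ℝ) (n : ℕ) (x : ℝ) :
    polarIter f (n + 1) x = (polarIter f n (x ^ 2) + polarIter f n (1 - (1 - x) ^ 2)) / 2 :=
  rfl

theorem polarIter_add (f : ℝ → ℝ) (m k : ℕ) :
    polarIter f (m + k) = polarIter (polarIter f m) k := by
  induction k with
  | zero => rfl
  | succ k ih => funext x; rw [← add_assoc, polarIter_succ, polarIter_succ, ih]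

theorem polarIter_const_mul (c : ℝ) (f : ℝ → ℝ) (n : ℕ) (x : ℝ) :
    polarIter (fun y => c * f y) n x = c * polarIter f n x := by
  induction n generalizing x with
  | zero => rfl
  | succ n ih => rw [polarIter_succ, polarIter_succ, ih, ih]; ring

theorem polarIter_id (n : ℕ) (x : ℝ) : polarIter (fun y => y) n x = x := by
  induction n generalizing x with
  | zero => rfl
  | succ n ih => rw [polarIter_succ, ih, ih]; ring

theorem polarIter_nonneg (hf : 0 ≤ f) (n : ℕ) (x : ℝ) : 0 ≤ polarIter f n x := by
  induction n generalizing x with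
  | zero => exact hf x
  | succ n ih => rw [polarIter_succ]; linarith [ih (x ^ 2), ih (1 - (1 - x) ^ 2)]

theorem polarIter_pos (hf : ∀ x ∈ Ioo (0 : ℝ) 1, 0 < f x) (n : ℕ) :
    ∀ x ∈ Ioo (0 : ℝ) 1, 0 < polarIter f n x := by
  induction n with
  | zero => exact hf
  | succ n ih =>
    intro x hx
    rw [polarIter_succ]
    linarith [ih _ (sq_mem_Ioo_zero_one hx), ih _ (one_sub_one_sub_sq_mem_Ioo_zero_one hx)]

theorem polarIter_mono (h : ∀ x ∈ Ioo (0 : ℝ) 1, f x ≤ g x) (n : ℕ) :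
    ∀ x ∈ Ioo (0 : ℝ) 1, polarIter f n x ≤ polarIter g n x := by
  induction n with
  | zero => exact h
  | succ n ih =>
    intro x hx
    rw [polarIter_succ, polarIter_succ]
    linarith [ih _ (sq_mem_Ioo_zero_one hx), ih _ (one_sub_one_sub_sq_mem_Ioo_zero_one hx)]

theorem polarIter_one_sub (hf : ∀ x, f (1 - x) = f x) (n : ℕ) (x : ℝ) :
    polarIter f n (1 - x) = polarIter f n x := by
  induction n generalizing x with
  | zero => exact hf x
  | succ n ih =>
    rw [polarIter_succ, polarIter_succ, ← ih (x ^ 2), ← ih ((1 - x) ^ 2)]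
    ring_nf

theorem polarIter_add_le_pow_mul {m : ℕ} {B : ℝ} (hB0 : 0 ≤ B)
    (hB : ∀ x ∈ Ioo (0 : ℝ) 1, polarIter f (m + 1) x ≤ B * polarIter f m x) (k : ℕ) :
    ∀ x ∈ Ioo (0 : ℝ) 1, polarIter f (m + k) x ≤ B ^ k * polarIter f m x := by
  induction k with
  | zero => simp
  | succ k ih =>
    intro x hx
    calc polarIter f (m + (k + 1)) x = polarIter (polarIter f (m + 1)) k x := by
          rw [← polarIter_add, add_right_comm, add_assoc]
      _ ≤ polarIter (fun y => B * polarIter f m y) k x := polarIter_mono hB k x hx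
      _ = B * polarIter f (m + k) x := by rw [polarIter_const_mul, polarIter_add]
      _ ≤ B * (B ^ k * polarIter f m x) := mul_le_mul_of_nonneg_left (ih x hx) hB0
      _ = B ^ (k + 1) * polarIter f m x := by ring

theorem polarIter_indicator_nonneg (s : Set ℝ) (n : ℕ) (x : ℝ) :
    0 ≤ polarIter (s.indicator 1) n x :=
  polarIter_nonneg (fun y => indicator_nonneg (fun _ _ => zero_le_one) y) n x

end PolarIter

section BernoulliMeasure

def padFalse {n : ℕ} (w : Fin n → Bool) : ℕ → Bool :=
  fun i => if h : i < n then w ⟨i, h⟩ else false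

theorem padFalse_of_lt {n : ℕ} (w : Fin n → Bool) {i : ℕ} (hi : i < n) :
    padFalse w i = w ⟨i, hi⟩ :=
  dif_pos hi

open Classical in
theorem IsBernoulliHalf.measure_eq_card_mul {μ : Measure (ℕ → Bool)} (hμ : IsBernoulliHalf μ)
    {n : ℕ} {E : Set (ℕ → Bool)}
    (hE : ∀ ω ω' : ℕ → Bool, (∀ i < n, ω i = ω' i) → ω ∈ E → ω' ∈ E) :
    μ E = (Finset.univ.filter fun w : Fin n → Bool => padFalse w ∈ E).card * 2⁻¹ ^ n := by
  set cylinder : (Fin n → Bool) → Set (ℕ → Bool) := fun w => {ω | ∀ i : Fin n, ω i = w i}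
  have hE_eq : E = ⋃ w ∈ Finset.univ.filter fun w : Fin n → Bool => padFalse w ∈ E,
      cylinder w := by
    ext ω
    simp only [Finset.mem_filter, Finset.mem_univ, true_and, mem_iUnion, exists_prop]
    constructor
    · intro hω
      refine ⟨fun i => ω i, hE ω _ (fun i hi => (padFalse_of_lt (fun i : Fin n => ω i) hi).symm) hω,
        fun i => rfl⟩
    · rintro ⟨w, hw, hωw⟩
      exact hE _ ω (fun i hi => by rw [padFalse_of_lt _ hi, hωw ⟨i, hi⟩]) hw
  have hdisj : PairwiseDisjoint (↑(Finset.univ.filter fun w : Fin n → Bool => padFalse w ∈ E))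
      cylinder := by
    intro w _ w' _ hne
    refine disjoint_left.2 fun ω hω hω' => hne (funext fun i => ?_)
    rw [← hω i, ← hω' i]
  have hmeas : ∀ w : Fin n → Bool, MeasurableSet (cylinder w) := fun w => by
    simp only [cylinder, ofPred_forall]
    exact .iInter fun i => measurableSet_eq_fun (measurable_pi_apply _) measurable_const
  nth_rewrite 1 [hE_eq]
  rw [measure_biUnion_finset hdisj fun w _ => hmeas w]
  simp only [cylinder, hμ n, Finset.sum_const, nsmul_eq_mul]

theorem becZ_congr (z : ℝ) {n : ℕ} {ω ω' : ℕ → Bool} (h : ∀ i < n, ω i = ω' i) :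
    becZ z n ω = becZ z n ω' := by
  induction n with
  | zero => rfl
  | succ n ih =>
    simp only [becZ]
    rw [h n n.lt_succ_self, ih fun i hi => h i (hi.trans n.lt_succ_self)]

theorem polarIter_eq_sum (f : ℝ → ℝ) (n : ℕ) (z : ℝ) :
    polarIter f n z = (∑ w : Fin n → Bool, f (becZ z n (padFalse w))) / 2 ^ n := by
  induction n generalizing f with
  | zero => simp [polarIter, becZ]
  | succ n ih =>
    have hpad : ∀ (b : Bool) (w : Fin n → Bool),
        becZ z (n + 1) (padFalse (Fin.snoc w b : Fin (n + 1) → Bool))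
          = becT b (becZ z n (padFalse w)) := by
      intro b w
      have hlast : padFalse (Fin.snoc w b : Fin (n + 1) → Bool) n = b := by
        rw [padFalse_of_lt _ n.lt_succ_self]
        exact Fin.snoc_last (α := fun _ => Bool) b w
      have hinit : ∀ i < n, padFalse (Fin.snoc w b : Fin (n + 1) → Bool) i = padFalse w i := by
        intro i hi
        rw [padFalse_of_lt _ hi, padFalse_of_lt _ (hi.trans n.lt_succ_self)]
        exact Fin.snoc_castSucc (α := fun _ => Bool) b w ⟨i, hi⟩
      simp only [becZ]
      rw [hlast, becZ_congr z hinit]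
    rw [show polarIter f (n + 1) = polarIter (polarIter f 1) n by rw [← polarIter_add, add_comm],
      ih, pow_succ', ← div_div, ← (Fin.snocEquiv fun _ => Bool).sum_comp,
      Fintype.sum_prod_type_right]
    congr 1
    rw [Finset.sum_div]
    refine Finset.sum_congr rfl fun w _ => ?_
    simp only [Fin.snocEquiv, Equiv.coe_fn_mk, Fintype.sum_bool, hpad, becT, if_true,
      Bool.false_eq_true, if_false, polarIter]
    ring_nf

theorem IsBernoulliHalf.toReal_measure_becZ_mem {μ : Measure (ℕ → Bool)} (hμ : IsBernoulliHalf μ)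
    (z : ℝ) (n : ℕ) (S : Set ℝ) :
    (μ {ω | becZ z n ω ∈ S}).toReal = polarIter (S.indicator 1) n z := by
  classical
  rw [hμ.measure_eq_card_mul fun ω ω' h hω => by rwa [mem_ofPred_eq, ← becZ_congr z h],
    polarIter_eq_sum, ENNReal.toReal_mul, ENNReal.toReal_pow, ENNReal.toReal_inv,
    ENNReal.toReal_natCast, ENNReal.toReal_ofNat, Finset.natCast_card_filter, inv_pow,
    div_eq_mul_inv]
  simp only [indicator_apply, Pi.one_apply, mem_ofPred_eq]

end BernoulliMeasure

section MulOneSub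

theorem one_sub_one_sub_sq_sq_le {x : ℝ} (hx0 : 0 ≤ x) (hx4 : x ≤ 4) :
    (1 - (1 - x) ^ 2) ^ 2 ≤ 4 * x ^ 2 := by
  nlinarith [mul_nonneg (mul_nonneg (sq_nonneg x) hx0) (sub_nonneg.2 hx4)]

theorem polarIter_mul_one_sub_pos (n : ℕ) {x : ℝ} (hx : x ∈ Ioo (0 : ℝ) 1) :
    0 < polarIter (fun y => y * (1 - y)) n x :=
  polarIter_pos (fun _ hy => mul_pos hy.1 (sub_pos.2 hy.2)) n x hx

theorem polarIter_mul_one_sub_le_self (n : ℕ) {x : ℝ} (hx : x ∈ Ioo (0 : ℝ) 1) :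
    polarIter (fun y => y * (1 - y)) n x ≤ x := by
  calc polarIter (fun y => y * (1 - y)) n x ≤ polarIter (fun y => y) n x :=
        polarIter_mono (fun y hy => by nlinarith [hy.1]) n x hx
    _ = x := polarIter_id n x

theorem polarIter_mul_one_sub_one_sub (n : ℕ) (x : ℝ) :
    polarIter (fun y => y * (1 - y)) n (1 - x) = polarIter (fun y => y * (1 - y)) n x :=
  polarIter_one_sub (fun _ => by ring) n x

/-- For `f = y (1 - y)` one step of the recursion is exactly `f - f²`; concavity of `t - t²`
propagates the inequality to all iterates. -/
theorem polarIter_mul_one_sub_succ_le (n : ℕ) (x : ℝ) :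
    polarIter (fun y => y * (1 - y)) (n + 1) x ≤
      polarIter (fun y => y * (1 - y)) n x - polarIter (fun y => y * (1 - y)) n x ^ 2 := by
  induction n generalizing x with
  | zero => exact (show _ = _ by simp only [polarIter]; ring).le
  | succ n ih =>
    rw [polarIter_succ _ (n + 1) x, polarIter_succ _ n x]
    nlinarith [ih (x ^ 2), ih (1 - (1 - x) ^ 2),
      sq_nonneg (polarIter (fun y => y * (1 - y)) n (x ^ 2) -
        polarIter (fun y => y * (1 - y)) n (1 - (1 - x) ^ 2))]

theorem sub_mul_sq_le_polarIter_mul_one_sub (n : ℕ) {x : ℝ} (hx : x ∈ Ioo (0 : ℝ) 1) :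
    x - 3 ^ n * x ^ 2 ≤ polarIter (fun y => y * (1 - y)) n x := by
  induction n generalizing x with
  | zero => simp only [polarIter]; nlinarith
  | succ n ih =>
    obtain ⟨hx0, hx1⟩ := hx
    have h3 : (0 : ℝ) ≤ 3 ^ n := by positivity
    have hsq : 3 ^ n * (x ^ 2) ^ 2 ≤ 3 ^ n * x ^ 2 :=
      mul_le_mul_of_nonneg_left (by nlinarith [sq_nonneg x, pow_lt_one₀ hx0.le hx1 two_ne_zero]) h3
    have ht0 : 3 ^ n * (1 - (1 - x) ^ 2) ^ 2 ≤ 3 ^ n * (4 * x ^ 2) :=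
      mul_le_mul_of_nonneg_left (one_sub_one_sub_sq_sq_le hx0.le (by linarith)) h3
    rw [polarIter_succ, pow_succ]
    nlinarith [ih (sq_mem_Ioo_zero_one ⟨hx0, hx1⟩),
      ih (one_sub_one_sub_sq_mem_Ioo_zero_one ⟨hx0, hx1⟩)]

theorem le_one_sub_of_mul_le_polarIter_mul_one_sub_succ {m : ℕ} {A : ℝ}
    (hA : A * polarIter (fun y => y * (1 - y)) m (1 / 2) ≤
      polarIter (fun y => y * (1 - y)) (m + 1) (1 / 2)) :
    A ≤ 1 - polarIter (fun y => y * (1 - y)) m (1 / 2) := by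
  have hpos := polarIter_mul_one_sub_pos m (x := 1 / 2) (by norm_num)
  have hstep := polarIter_mul_one_sub_succ_le m (1 / 2)
  nlinarith

/-- Near `0` the iterates are close to the identity, so `t₀` almost doubles them; the gap
`A ≤ 1 - f_m(1/2) < 1` then leaves room for a factor `1/2`. -/
theorem mul_polarIter_mul_one_sub_le_half {m : ℕ} {A x : ℝ} (hA0 : 0 ≤ A)
    (hA : A ≤ 1 - polarIter (fun y => y * (1 - y)) m (1 / 2)) (hx : x ∈ Ioo (0 : ℝ) 1)
    (hxsmall : (1 + 4 * 3 ^ m) * x ≤ 2 * polarIter (fun y => y * (1 - y)) m (1 / 2)) :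
    A * polarIter (fun y => y * (1 - y)) m x ≤
      polarIter (fun y => y * (1 - y)) m (1 - (1 - x) ^ 2) / 2 := by
  set ε := polarIter (fun y => y * (1 - y)) m (1 / 2)
  obtain ⟨hx0, hx1⟩ := hx
  have hfx : A * polarIter (fun y => y * (1 - y)) m x ≤ (1 - ε) * x :=
    mul_le_mul hA (polarIter_mul_one_sub_le_self m ⟨hx0, hx1⟩)
      (polarIter_mul_one_sub_pos m ⟨hx0, hx1⟩).le (by linarith)
  have hlow := sub_mul_sq_le_polarIter_mul_one_sub m
    (one_sub_one_sub_sq_mem_Ioo_zero_one ⟨hx0, hx1⟩)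
  have hsq : 3 ^ m * (1 - (1 - x) ^ 2) ^ 2 ≤ 3 ^ m * (4 * x ^ 2) :=
    mul_le_mul_of_nonneg_left (one_sub_one_sub_sq_sq_le hx0.le (by linarith)) (by positivity)
  nlinarith [mul_le_mul_of_nonneg_right hxsmall hx0.le]

end MulOneSub

theorem pow_le_of_one_sub_div_le_mul {y t : ℝ} {N : ℕ} (hy0 : 0 ≤ y) (hy1 : y ≤ 1) (ht : 0 < t)
    (h : (1 - t) / t ≤ N * (1 - y)) : y ^ N ≤ t := by
  have hbern : 1 + N * (1 - y) ≤ (2 - y) ^ N := by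
    simpa [add_sub_assoc', one_add_one_eq_two] using one_add_mul_le_pow (a := 1 - y) (by linarith) N
  have hprod : y ^ N * (2 - y) ^ N ≤ 1 := by
    rw [← mul_pow]
    exact pow_le_one₀ (by nlinarith) (by nlinarith)
  have hpos : 0 < 1 + N * (1 - y) := by
    have : (0 : ℝ) ≤ N * (1 - y) := mul_nonneg N.cast_nonneg (by linarith)
    linarith
  rw [div_le_iff₀ ht] at h
  refine le_of_mul_le_mul_right ?_ hpos
  calc y ^ N * (1 + N * (1 - y)) ≤ y ^ N * (2 - y) ^ N :=
        mul_le_mul_of_nonneg_left hbern (pow_nonneg hy0 N)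
    _ ≤ t * (1 + N * (1 - y)) := by linarith

section Steering

variable {a b c : ℝ}

noncomputable def steer (c x : ℝ) : ℝ := if x ≤ c then 1 - (1 - x) ^ 2 else x ^ 2

def steerable (a b c : ℝ) (n : ℕ) : Set ℝ := (steer c)^[n] ⁻¹' Icc a b

theorem mem_steerable_succ {n : ℕ} {x : ℝ} :
    x ∈ steerable a b c (n + 1) ↔ steer c x ∈ steerable a b c n :=
  Iff.rfl

theorem inv_two_pow_le_polarIter_indicator {n : ℕ} {x : ℝ} (hx : x ∈ steerable a b c n) :
    2⁻¹ ^ n ≤ polarIter ((Icc a b).indicator 1) n x := by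
  induction n generalizing x with
  | zero => exact (pow_zero _).trans_le (indicator_of_mem (s := Icc a b) hx (1 : ℝ → ℝ)).ge
  | succ n ih =>
    have hsteer := ih (mem_steerable_succ.1 hx)
    rw [polarIter_succ, pow_succ]
    unfold steer at hsteer
    split_ifs at hsteer
    · linarith [polarIter_indicator_nonneg (Icc a b) n (x ^ 2)]
    · linarith [polarIter_indicator_nonneg (Icc a b) n (1 - (1 - x) ^ 2)]

/-- These conditions make `[a, b]` invariant under `steer c`, let `t₀` lift any point below `a`
without overshooting `b`, and make repeated squaring of a point above `b` land in `[a, b]`. -/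
structure IsSteeringThreshold (a b c : ℝ) : Prop where
  pos : 0 < a
  lt_one : b < 1
  nonneg : 0 ≤ c
  le_one : c ≤ 1
  le_sq : a ≤ c ^ 2
  one_sub_one_sub_sq_le : 1 - (1 - c) ^ 2 ≤ b

namespace IsSteeringThreshold

variable (h : IsSteeringThreshold a b c)
include h

theorem left_le : a ≤ c := h.le_sq.trans (by nlinarith [h.nonneg, h.le_one])

theorem le_right : c ≤ b := le_trans (by nlinarith [h.nonneg, h.le_one]) h.one_sub_one_sub_sq_le

theorem left_lt_one : a < 1 := (h.left_le.trans h.le_right).trans_lt h.lt_one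

theorem right_pos : 0 < b := h.pos.trans_le (h.left_le.trans h.le_right)

theorem mapsTo_steer : MapsTo (steer c) (Icc a b) (Icc a b) := by
  rintro x ⟨hax, hxb⟩
  have hx0 : 0 < x := h.pos.trans_le hax
  have hx1 : x < 1 := hxb.trans_lt h.lt_one
  unfold steer
  split_ifs with hxc
  · have : (1 - c) ^ 2 ≤ (1 - x) ^ 2 := pow_le_pow_left₀ (by linarith [h.le_one]) (by linarith) 2
    exact ⟨by nlinarith, by linarith [h.one_sub_one_sub_sq_le]⟩
  · have : c ^ 2 ≤ x ^ 2 := pow_le_pow_left₀ h.nonneg (le_of_not_ge hxc) 2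
    exact ⟨by linarith [h.le_sq], by nlinarith⟩

theorem steerable_mono {j k : ℕ} (hjk : j ≤ k) : steerable a b c j ⊆ steerable a b c k := by
  intro x hx
  obtain ⟨i, rfl⟩ := Nat.exists_eq_add_of_le hjk
  simp only [steerable, mem_preimage, add_comm j, Function.iterate_add_apply]
  exact h.mapsTo_steer.iterate i hx

/-- Climbing from below `b`: each `t₀` step squares the distance to `1`. -/
theorem mem_steerable_of_one_sub_pow_le {y : ℝ} (hyb : y ≤ b) {k : ℕ}
    (hk : (1 - y) ^ 2 ^ k ≤ 1 - a) : y ∈ steerable a b c k := by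
  induction k generalizing y with
  | zero => exact show a ≤ y ∧ y ≤ b from ⟨by simp at hk; linarith, hyb⟩
  | succ k ih =>
    by_cases hay : a ≤ y
    · exact h.steerable_mono (Nat.zero_le _) ⟨hay, hyb⟩
    have hyc : y ≤ c := (le_of_not_ge hay).trans h.left_le
    refine mem_steerable_succ.2 ?_
    rw [steer, if_pos hyc]
    refine ih ?_ ?_
    · nlinarith [h.one_sub_one_sub_sq_le, h.le_one]
    · rwa [sub_sub_cancel, ← pow_mul, ← pow_succ']

/-- Descending from above `a`: squaring a point above `b ≥ c` lands above `b² ≥ c² ≥ a`. -/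
theorem mem_steerable_of_pow_le {y : ℝ} (hay : a ≤ y) {k : ℕ} (hk : y ^ 2 ^ k ≤ b) :
    y ∈ steerable a b c k := by
  induction k generalizing y with
  | zero => exact ⟨hay, by simpa using hk⟩
  | succ k ih =>
    by_cases hyb : y ≤ b
    · exact h.steerable_mono (Nat.zero_le _) ⟨hay, hyb⟩
    have hcy : c < y := h.le_right.trans_lt (lt_of_not_ge hyb)
    refine mem_steerable_succ.2 ?_
    rw [steer, if_neg (not_le.2 hcy)]
    refine ih ?_ ?_
    · nlinarith [h.le_sq, h.nonneg]
    · rwa [← pow_mul, ← pow_succ']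

theorem exists_mem_steerable {x : ℝ} (hx : x ∈ Ioo (0 : ℝ) 1) : ∃ k, x ∈ steerable a b c k := by
  obtain ⟨hx0, hx1⟩ := hx
  by_cases hxb : x ≤ b
  · obtain ⟨k, hk⟩ := exists_pow_lt_of_lt_one (sub_pos.2 h.left_lt_one) (by linarith : 1 - x < 1)
    refine ⟨k, h.mem_steerable_of_one_sub_pow_le hxb ?_⟩
    exact (pow_le_pow_of_le_one (by linarith) (by linarith) Nat.lt_two_pow_self.le).trans hk.le
  · obtain ⟨k, hk⟩ := exists_pow_lt_of_lt_one h.right_pos hx1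
    refine ⟨k, h.mem_steerable_of_pow_le ?_ ?_⟩
    · linarith [h.left_le.trans h.le_right]
    · exact (pow_le_pow_of_le_one hx0.le hx1.le Nat.lt_two_pow_self.le).trans hk.le

theorem two_pow_mul_sq_lt_of_sq_notMem {n : ℕ} {x : ℝ} (hx : x ∈ Ioo (0 : ℝ) 1) (hxc : x ≤ c)
    (hn : x ^ 2 ∉ steerable a b c n) : 2 ^ n * x ^ 2 < a / (1 - a) := by
  by_contra! hle
  refine hn (h.mem_steerable_of_one_sub_pow_le ?_ (pow_le_of_one_sub_div_le_mul ?_ ?_ ?_ ?_))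
  · nlinarith [hx.1, h.le_right, h.le_one]
  · nlinarith [hx.1, hx.2]
  · nlinarith [hx.1]
  · linarith [h.left_lt_one]
  · rw [sub_sub_cancel, sub_sub_cancel, Nat.cast_pow, Nat.cast_ofNat]
    exact hle

theorem two_pow_mul_sq_lt_of_one_sub_one_sub_sq_notMem {n : ℕ} {x : ℝ} (hx : x ∈ Ioo (0 : ℝ) 1)
    (hcx : c < x) (hn : 1 - (1 - x) ^ 2 ∉ steerable a b c n) :
    2 ^ n * (1 - x) ^ 2 < (1 - b) / b := by
  by_contra! hle
  obtain ⟨hx0, hx1⟩ := hx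
  refine hn (h.mem_steerable_of_pow_le ?_ (pow_le_of_one_sub_div_le_mul ?_ ?_ ?_ ?_))
  · nlinarith [h.left_le]
  · nlinarith
  · nlinarith
  · exact h.right_pos
  · rw [sub_sub_cancel, Nat.cast_pow, Nat.cast_ofNat]
    exact hle

theorem exists_lt_of_child_notMem_steerable {δ : ℝ} (hδ : 0 < δ) :
    ∃ N : ℕ, ∀ n, N ≤ n → ∀ x ∈ Ioo (0 : ℝ) 1,
      (x ≤ c → x ^ 2 ∉ steerable a b c n → x < δ) ∧
        (c < x → 1 - (1 - x) ^ 2 ∉ steerable a b c n → 1 - x < δ) := by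
  obtain ⟨N, hN⟩ := pow_unbounded_of_one_lt (max (a / (1 - a)) ((1 - b) / b) / δ ^ 2) one_lt_two
  rw [div_lt_iff₀ (by positivity)] at hN
  have hlt : ∀ n, N ≤ n → ∀ u : ℝ, 0 ≤ u →
      2 ^ n * u ^ 2 < max (a / (1 - a)) ((1 - b) / b) → u < δ := by
    intro n hn u hu hlt
    by_contra! hδu
    have h2 : (2 : ℝ) ^ N ≤ 2 ^ n := pow_le_pow_right₀ one_le_two hn
    have hsq : δ ^ 2 ≤ u ^ 2 := pow_le_pow_left₀ hδ.le hδu 2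
    nlinarith [pow_pos (two_pos (α := ℝ)) N, pow_pos hδ 2]
  refine ⟨N, fun n hn x hx => ⟨fun hxc hx2 => ?_, fun hcx hx0 => ?_⟩⟩
  · exact hlt n hn x hx.1.le
      ((h.two_pow_mul_sq_lt_of_sq_notMem hx hxc hx2).trans_le (le_max_left _ _))
  · exact hlt n hn (1 - x) (by linarith [hx.2])
      ((h.two_pow_mul_sq_lt_of_one_sub_one_sub_sq_notMem hx hcx hx0).trans_le (le_max_right _ _))

end IsSteeringThreshold

theorem mul_le_avg_indicator_steerable {φ : ℝ → ℝ} {A δ : ℝ} {n : ℕ}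
    (hsymm : ∀ x, φ (1 - x) = φ x)
    (hA : ∀ x ∈ Ioo (0 : ℝ) 1, A * φ x ≤ (φ (x ^ 2) + φ (1 - (1 - x) ^ 2)) / 2)
    (hsmall : ∀ x ∈ Ioo (0 : ℝ) 1, x < δ → A * φ x ≤ φ (1 - (1 - x) ^ 2) / 2)
    {x : ℝ} (hx : x ∈ Ioo (0 : ℝ) 1) (hxs : x ∈ steerable a b c (n + 1))
    (hlow : x ≤ c → x ^ 2 ∉ steerable a b c n → x < δ)
    (hhigh : c < x → 1 - (1 - x) ^ 2 ∉ steerable a b c n → 1 - x < δ) :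
    A * φ x ≤ ((steerable a b c n).indicator φ (x ^ 2) +
      (steerable a b c n).indicator φ (1 - (1 - x) ^ 2)) / 2 := by
  rw [mem_steerable_succ, steer] at hxs
  by_cases h1 : x ^ 2 ∈ steerable a b c n
  · by_cases h0 : 1 - (1 - x) ^ 2 ∈ steerable a b c n
    · rw [indicator_of_mem h1, indicator_of_mem h0]
      exact hA x hx
    have hcx : c < x := lt_of_not_ge fun hxc => h0 (by rwa [if_pos hxc] at hxs)
    have hlarge := hsmall (1 - x) ⟨by linarith [hx.2], by linarith [hx.1]⟩ (hhigh hcx h0)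
    rw [hsymm, show 1 - (1 - (1 - x)) ^ 2 = 1 - x ^ 2 by ring, hsymm] at hlarge
    rw [indicator_of_mem h1, indicator_of_notMem h0]
    linarith
  · have hxc : x ≤ c := le_of_not_gt fun hcx => h1 (by rwa [if_neg (not_le.2 hcx)] at hxs)
    rw [if_pos hxc] at hxs
    rw [indicator_of_notMem h1, indicator_of_mem hxs]
    linarith [hsmall x hx (hlow hxc h1)]

/-- Comparison with a subsolution `φ` of the polar recursion along the steering policy: where a
child cannot reach `[a, b]` in time, the point is within `δ` of `0` or `1`, and there `φ` of the
other child alone already carries the mass. -/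
theorem IsSteeringThreshold.exists_pow_mul_le_polarIter_indicator (h : IsSteeringThreshold a b c)
    {φ : ℝ → ℝ} {A δ : ℝ} (hδ : 0 < δ) (hA0 : 0 ≤ A) (hA1 : A ≤ 1)
    (hφ : ∀ x ∈ Ioo (0 : ℝ) 1, φ x ≤ 1) (hsymm : ∀ x, φ (1 - x) = φ x)
    (hA : ∀ x ∈ Ioo (0 : ℝ) 1, A * φ x ≤ (φ (x ^ 2) + φ (1 - (1 - x) ^ 2)) / 2)
    (hsmall : ∀ x ∈ Ioo (0 : ℝ) 1, x < δ → A * φ x ≤ φ (1 - (1 - x) ^ 2) / 2) :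
    ∃ N : ℕ, ∀ n, N ≤ n → ∀ x ∈ Ioo (0 : ℝ) 1,
      2⁻¹ ^ N * A ^ n * (steerable a b c n).indicator φ x ≤
        polarIter ((Icc a b).indicator 1) n x := by
  obtain ⟨N, hN⟩ := h.exists_lt_of_child_notMem_steerable hδ
  refine ⟨N, fun n hn => ?_⟩
  induction n, hn using Nat.le_induction with
  | base =>
    intro x hx
    by_cases hxs : x ∈ steerable a b c N
    · have hAφ : A ^ N * φ x ≤ 1 :=
        (mul_le_of_le_one_right (pow_nonneg hA0 N) (hφ x hx)).trans (pow_le_one₀ hA0 hA1)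
      rw [indicator_of_mem hxs, mul_assoc]
      exact (mul_le_of_le_one_right (by positivity) hAφ).trans
        (inv_two_pow_le_polarIter_indicator hxs)
    · rw [indicator_of_notMem hxs, mul_zero]
      exact polarIter_indicator_nonneg _ N x
  | succ n hn ih =>
    intro x hx
    by_cases hxs : x ∈ steerable a b c (n + 1)
    · obtain ⟨hlow, hhigh⟩ := hN n hn x hx
      have hstep := mul_le_avg_indicator_steerable hsymm hA hsmall hx hxs hlow hhigh
      have hD : 0 ≤ 2⁻¹ ^ N * A ^ n := by positivity
      rw [indicator_of_mem hxs, polarIter_succ]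
      calc 2⁻¹ ^ N * A ^ (n + 1) * φ x = 2⁻¹ ^ N * A ^ n * (A * φ x) := by ring
        _ ≤ 2⁻¹ ^ N * A ^ n * (((steerable a b c n).indicator φ (x ^ 2) +
              (steerable a b c n).indicator φ (1 - (1 - x) ^ 2)) / 2) :=
          mul_le_mul_of_nonneg_left hstep hD
        _ ≤ _ := by
          linarith [ih _ (sq_mem_Ioo_zero_one hx), ih _ (one_sub_one_sub_sq_mem_Ioo_zero_one hx)]
    · rw [indicator_of_notMem hxs, mul_zero]
      exact polarIter_indicator_nonneg _ (n + 1) x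

end Steering

theorem IsSteeringThreshold.exists_mul_pow_le_polarIter_indicator {a b c : ℝ}
    (h : IsSteeringThreshold a b c) {m : ℕ} {z A : ℝ} (hz : z ∈ Ioo (0 : ℝ) 1) (hA0 : 0 ≤ A)
    (hA : ∀ ζ ∈ Ioo (0 : ℝ) 1, A * polarIter (fun x => x * (1 - x)) m ζ ≤
      polarIter (fun x => x * (1 - x)) (m + 1) ζ) :
    ∃ D > 0, ∃ N : ℕ, ∀ n, N ≤ n → D * A ^ n ≤ polarIter ((Icc a b).indicator 1) n z := by
  have hhalf : (1 / 2 : ℝ) ∈ Ioo 0 1 := ⟨one_half_pos, one_half_lt_one⟩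
  set ε := polarIter (fun x => x * (1 - x)) m (1 / 2)
  have hε : 0 < ε := polarIter_mul_one_sub_pos m hhalf
  have hAε : A ≤ 1 - ε := le_one_sub_of_mul_le_polarIter_mul_one_sub_succ (hA _ hhalf)
  obtain ⟨N, hN⟩ :=
    h.exists_pow_mul_le_polarIter_indicator (φ := polarIter (fun x => x * (1 - x)) m)
    (δ := 2 * ε / (1 + 4 * 3 ^ m)) (by positivity) hA0 (by linarith)
    (fun x hx => (polarIter_mul_one_sub_le_self m hx).trans hx.2.le)
    (polarIter_mul_one_sub_one_sub m) hA
    (fun x hx hxδ => mul_polarIter_mul_one_sub_le_half hA0 hAε hx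
      (by rw [lt_div_iff₀ (by positivity)] at hxδ; linarith))
  obtain ⟨k, hk⟩ := h.exists_mem_steerable hz
  refine ⟨2⁻¹ ^ N * polarIter (fun x => x * (1 - x)) m z,
    mul_pos (by positivity) (polarIter_mul_one_sub_pos m hz), max N k, fun n hn => ?_⟩
  have := hN n (le_of_max_le_left hn) z hz
  rw [indicator_of_mem (h.steerable_mono (le_of_max_le_right hn) hk)] at this
  linarith

theorem isSteeringThreshold_of_sqrt_le {a b : ℝ} (ha : a ∈ Ioo (0 : ℝ) 1) (hb : b ∈ Ioo (0 : ℝ) 1)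
    (hab : √a ≤ 1 - √(1 - b)) : IsSteeringThreshold a b (1 - √(1 - b)) where
  pos := ha.1
  lt_one := hb.2
  nonneg := sub_nonneg.2 (Real.sqrt_le_one.2 (by linarith [hb.1]))
  le_one := sub_le_self _ (Real.sqrt_nonneg _)
  le_sq := by
    calc a = √a ^ 2 := (Real.sq_sqrt ha.1.le).symm
      _ ≤ _ := pow_le_pow_left₀ (Real.sqrt_nonneg a) hab 2
  one_sub_one_sub_sq_le := by
    rw [sub_sub_cancel, Real.sq_sqrt (by linarith [hb.2])]
    linarith

section UpperBound

theorem min_mul_one_sub_le {a b x : ℝ} (hx : x ∈ Icc a b) :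
    min (a * (1 - a)) (b * (1 - b)) ≤ x * (1 - x) := by
  obtain ⟨hax, hxb⟩ := hx
  rcases le_or_gt x (1 - a) with hx1 | hx1
  · exact (min_le_left _ _).trans (by nlinarith)
  · exact (min_le_right _ _).trans (by nlinarith)

theorem polarIter_indicator_le_inv_mul {a b κ : ℝ} {g : ℝ → ℝ} (hκ : 0 < κ)
    (hg0 : ∀ x ∈ Ioo (0 : ℝ) 1, 0 ≤ g x) (hg : ∀ x ∈ Icc a b, κ ≤ g x) (n : ℕ) {x : ℝ}
    (hx : x ∈ Ioo (0 : ℝ) 1) :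
    polarIter ((Icc a b).indicator 1) n x ≤ κ⁻¹ * polarIter g n x := by
  rw [← polarIter_const_mul]
  refine polarIter_mono (fun y hy => ?_) n x hx
  by_cases hyab : y ∈ Icc a b
  · rw [indicator_of_mem hyab, Pi.one_apply, ← div_eq_inv_mul, one_le_div hκ]
    exact hg y hyab
  · rw [indicator_of_notMem hyab]
    exact mul_nonneg (inv_nonneg.2 hκ.le) (hg0 y hy)

theorem exists_polarIter_indicator_le_mul_pow {a b z B : ℝ} {m : ℕ} (ha : a ∈ Ioo (0 : ℝ) 1)
    (hb : b ∈ Ioo (0 : ℝ) 1) (hz : z ∈ Ioo (0 : ℝ) 1)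
    (hB : ∀ ζ ∈ Ioo (0 : ℝ) 1,
      polarIter (fun x => (x * (1 - x)) ^ ((2 : ℝ) / 3)) (m + 1) ζ ≤
        B * polarIter (fun x => (x * (1 - x)) ^ ((2 : ℝ) / 3)) m ζ) :
    ∃ C > 0, ∀ n, m ≤ n → polarIter ((Icc a b).indicator 1) n z ≤ C * B ^ n := by
  set g : ℝ → ℝ := fun x => (x * (1 - x)) ^ ((2 : ℝ) / 3)
  set κ := min (a * (1 - a)) (b * (1 - b)) ^ ((2 : ℝ) / 3)
  have hg : ∀ x ∈ Ioo (0 : ℝ) 1, 0 < g x := fun x hx =>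
    Real.rpow_pos_of_pos (mul_pos hx.1 (sub_pos.2 hx.2)) _
  have hκ : 0 < κ := Real.rpow_pos_of_pos
    (lt_min (mul_pos ha.1 (sub_pos.2 ha.2)) (mul_pos hb.1 (sub_pos.2 hb.2))) _
  have hB0 : 0 < B := by
    have hhalf : (1 / 2 : ℝ) ∈ Ioo 0 1 := ⟨one_half_pos, one_half_lt_one⟩
    exact pos_of_mul_pos_left ((polarIter_pos hg _ _ hhalf).trans_le (hB _ hhalf))
      (polarIter_pos hg _ _ hhalf).le
  refine ⟨κ⁻¹ * polarIter g m z / B ^ m, by positivity [polarIter_pos hg m z hz], fun n hn => ?_⟩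
  obtain ⟨k, rfl⟩ := Nat.exists_eq_add_of_le hn
  calc polarIter ((Icc a b).indicator 1) (m + k) z ≤ κ⁻¹ * polarIter g (m + k) z :=
        polarIter_indicator_le_inv_mul hκ (fun x hx => (hg x hx).le)
          (fun x hx => Real.rpow_le_rpow (le_min (mul_pos ha.1 (sub_pos.2 ha.2)).le
            (mul_pos hb.1 (sub_pos.2 hb.2)).le) (min_mul_one_sub_le hx) (by norm_num)) _ hz
    _ ≤ κ⁻¹ * (B ^ k * polarIter g m z) :=
        mul_le_mul_of_nonneg_left (polarIter_add_le_pow_mul hB0.le hB k z hz) (by positivity)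
    _ = κ⁻¹ * polarIter g m z / B ^ m * B ^ (m + k) := by
        rw [pow_add]; field_simp

end UpperBound

theorem exists_mul_rpow_mul_pow_le {A D C : ℝ} {p : ℕ → ℝ} {N : ℕ} (hA0 : 0 ≤ A) (hA1 : A ≤ 1)
    (hp : ∀ n, 0 ≤ p n) (hD : 0 < D) (hC : 0 ≤ C) (h : ∀ n, N ≤ n → D * A ^ n ≤ p n) :
    ∃ D' > 0, ∀ n : ℕ, 1 ≤ n → D' * (n : ℝ) ^ (-C) * A ^ n ≤ (2 : ℝ) ^ (-(n : ℝ)) + p n := by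
  set D' := min D ((2 : ℝ) ^ (-(N : ℝ)))
  refine ⟨D', lt_min hD (by positivity), fun n hn => ?_⟩
  have hrpow : (n : ℝ) ^ (-C) ≤ 1 :=
    Real.rpow_le_one_of_one_le_of_nonpos (by exact_mod_cast hn) (by linarith)
  have hD'A : D' * (n : ℝ) ^ (-C) * A ^ n ≤ D' * A ^ n := by
    rw [mul_assoc]
    exact mul_le_mul_of_nonneg_left (mul_le_of_le_one_left (pow_nonneg hA0 n) hrpow)
      (by positivity)
  rcases le_or_gt N n with hNn | hnN
  · calc D' * (n : ℝ) ^ (-C) * A ^ n ≤ D * A ^ n :=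
          hD'A.trans (mul_le_mul_of_nonneg_right (min_le_left _ _) (pow_nonneg hA0 n))
      _ ≤ p n := h n hNn
      _ ≤ (2 : ℝ) ^ (-(n : ℝ)) + p n := le_add_of_nonneg_left (by positivity)
  · calc D' * (n : ℝ) ^ (-C) * A ^ n ≤ D' :=
          hD'A.trans (mul_le_of_le_one_right (by positivity) (pow_le_one₀ hA0 hA1))
      _ ≤ (2 : ℝ) ^ (-(N : ℝ)) := min_le_right _ _
      _ ≤ (2 : ℝ) ^ (-(n : ℝ)) :=
          Real.rpow_le_rpow_of_exponent_le one_le_two (by simpa using hnN.le)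
      _ ≤ (2 : ℝ) ^ (-(n : ℝ)) + p n := le_add_of_nonneg_right (hp n)

theorem stmt2_general (μ : Measure (ℕ → Bool)) (hμ : IsBernoulliHalf μ)
    (m : ℕ) (z : ℝ) (hz : z ∈ Set.Ioo (0:ℝ) 1)
    (a b : ℝ) (ha : a ∈ Set.Ioo (0:ℝ) 1) (hb : b ∈ Set.Ioo (0:ℝ) 1)
    (hab : Real.sqrt a ≤ 1 - Real.sqrt (1 - b))
    (A B : ℝ) (hA0 : 0 ≤ A)
    (hA : ∀ ζ ∈ Set.Ioo (0:ℝ) 1,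
      A * polarIter (fun x => x * (1 - x)) m ζ ≤ polarIter (fun x => x * (1 - x)) (m + 1) ζ)
    (hB : ∀ ζ ∈ Set.Ioo (0:ℝ) 1,
      polarIter (fun x => (x * (1 - x)) ^ ((2:ℝ)/3)) (m + 1) ζ ≤
        B * polarIter (fun x => (x * (1 - x)) ^ ((2:ℝ)/3)) m ζ) :
    ∃ C₁ C₂ D : ℝ, 0 < C₁ ∧ 0 < C₂ ∧ 0 < D ∧
      ∀ n : ℕ, max m 1 ≤ n →
        D * (n : ℝ) ^ (-C₁) * A ^ n ≤
            (2:ℝ) ^ (-(n:ℝ)) + (μ {ω | becZ z n ω ∈ Set.Icc a b}).toReal ∧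
        (μ {ω | becZ z n ω ∈ Set.Icc a b}).toReal ≤ C₂ * B ^ n := by
  have hA1 : A ≤ 1 := by
    have hhalf : (1 / 2 : ℝ) ∈ Ioo 0 1 := ⟨one_half_pos, one_half_lt_one⟩
    linarith [le_one_sub_of_mul_le_polarIter_mul_one_sub_succ (hA _ hhalf),
      polarIter_mul_one_sub_pos m hhalf]
  obtain ⟨D, hD, N, hlower⟩ :=
    (isSteeringThreshold_of_sqrt_le ha hb hab).exists_mul_pow_le_polarIter_indicator hz hA0 hA
  obtain ⟨D', hD', hslack⟩ := exists_mul_rpow_mul_pow_le hA0 hA1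
    (fun n => polarIter_indicator_nonneg _ n z)
    hD zero_le_one hlower
  obtain ⟨C₂, hC₂, hupper⟩ := exists_polarIter_indicator_le_mul_pow ha hb hz hB
  refine ⟨1, C₂, D', one_pos, hC₂, hD', fun n hn => ?_⟩
  rw [hμ.toReal_measure_becZ_mem]
  exact ⟨hslack n (le_of_max_le_right hn), hupper n (le_of_max_le_left hn)⟩

theorem stmt2 (μ : Measure (ℕ → Bool)) [IsProbabilityMeasure μ] (hμ : IsBernoulliHalf μ)
    (m : ℕ) (z : ℝ) (hz : z ∈ Set.Ioo (0:ℝ) 1)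
    (a b : ℝ) (ha : a ∈ Set.Ioo (0:ℝ) 1) (hb : b ∈ Set.Ioo (0:ℝ) 1)
    (hab : Real.sqrt a ≤ 1 - Real.sqrt (1 - b))
    (A B : ℝ) (hA0 : 0 ≤ A) (hB0 : 0 ≤ B)
    (hA : ∀ ζ ∈ Set.Ioo (0:ℝ) 1,
      A * polarIter (fun x => x * (1 - x)) m ζ ≤ polarIter (fun x => x * (1 - x)) (m + 1) ζ)
    (hB : ∀ ζ ∈ Set.Ioo (0:ℝ) 1,
      polarIter (fun x => (x * (1 - x)) ^ ((2:ℝ)/3)) (m + 1) ζ ≤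
        B * polarIter (fun x => (x * (1 - x)) ^ ((2:ℝ)/3)) m ζ) :
    ∃ C₁ C₂ D : ℝ, 0 < C₁ ∧ 0 < C₂ ∧ 0 < D ∧
      ∀ n : ℕ, max m 1 ≤ n →
        D * (n : ℝ) ^ (-C₁) * A ^ n ≤
            (2:ℝ) ^ (-(n:ℝ)) + (μ {ω | becZ z n ω ∈ Set.Icc a b}).toReal ∧
        (μ {ω | becZ z n ω ∈ Set.Icc a b}).toReal ≤ C₂ * B ^ n :=
  stmt2_general μ hμ m z hz a b ha hb hab A B hA0 hA hB
end

section
/- Let z ∈ [0,1] and let (Z_n) be the BEC Bhattacharyya process started at z. Then for every integer n ≥ 1 and every integer j with 1 ≤ j ≤ n: 2^{−j}·Pr( Z_n ∈ [2^{−(j+1)}, 2^{−j}] ) ≤ (n+1)·Pr( Z_n ∈ [1/4, 3/4] ) + 2^{−n}. -/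
open MeasureTheory

/-!
`Pr(Z_n ∈ A)` is `2⁻ⁿ` times the number of bit strings of length `n` whose trajectory from `z`
ends in `A`, so the claim is the counting inequality `#I ≤ 2^j ((n+1) #M + 1)` for the band
`I = [2^{-(j+1)}, 2^{-j}]` and `M = [1/4, 3/4]`. Splitting on the first bit, this follows by
induction from the case `#M = 0`, where `#I ≤ 2^j`. A trajectory from `x` that never meets `M`
either starts above `3/4`, and then stays above `x^(2^n) > 3/4` since every step is at least a
squaring; or starts below `1/4`, and then by the symmetry `x ↦ 1 - x` we get
`(1 - x)^(2^n) > 3/4`, which by Bernoulli's inequality forces `2^n x ≤ 1/3`. In that case a `t₁`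
step taken while more than `j` steps remain leaves the trajectory too small to reach `I`, since
each step at most doubles it; so at most `2^j` strings count.
-/

open Finset

lemma becT_mem_Icc {x : ℝ} (hx : x ∈ Set.Icc (0:ℝ) 1) (b : Bool) :
    becT b x ∈ Set.Icc (0:ℝ) 1 := by
  obtain ⟨h0, h1⟩ := hx
  cases b <;> simp only [becT, Bool.false_eq_true, if_true, if_false] <;> constructor <;> nlinarith

lemma sq_le_becT {x : ℝ} (hx : x ∈ Set.Icc (0:ℝ) 1) (b : Bool) : x ^ 2 ≤ becT b x := by
  obtain ⟨h0, h1⟩ := hx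
  cases b <;> simp only [becT, Bool.false_eq_true, if_true, if_false] <;> nlinarith

lemma becT_le_two_mul {x : ℝ} (hx : x ∈ Set.Icc (0:ℝ) 1) (b : Bool) : becT b x ≤ 2 * x := by
  obtain ⟨h0, h1⟩ := hx
  cases b <;> simp only [becT, Bool.false_eq_true, if_true, if_false] <;> nlinarith

lemma becT_one_sub (b : Bool) (x : ℝ) : becT b (1 - x) = 1 - becT (!b) x := by
  cases b <;> simp only [becT, Bool.not_false, Bool.not_true, Bool.false_eq_true, if_true,
    if_false] <;> ring

open scoped Classical in
/-- `becCount A k x` is the number of bit strings of length `k` whose trajectory from `x` ends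
in `A`; thus `Pr(Z_k ∈ A) = 2⁻ᵏ · becCount A k z`. -/
noncomputable def becCount (A : Set ℝ) : ℕ → ℝ → ℕ
  | 0, x => if x ∈ A then 1 else 0
  | k + 1, x => becCount A k (becT false x) + becCount A k (becT true x)

lemma becCount_succ' (A : Set ℝ) (k : ℕ) (x : ℝ) :
    becCount A (k + 1) x =
      becCount (becT false ⁻¹' A) k x + becCount (becT true ⁻¹' A) k x := by
  induction k generalizing x with
  | zero => rfl
  | succ k ih =>
    rw [becCount, ih, ih, becCount, becCount]
    omega

lemma becCount_le (A : Set ℝ) (k : ℕ) (x : ℝ) : becCount A k x ≤ 2 ^ k := by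
  induction k generalizing x with
  | zero => simp only [becCount]; split <;> simp
  | succ k ih =>
    have := ih (becT false x)
    have := ih (becT true x)
    rw [becCount, pow_succ]
    omega

lemma becCount_becT_le (A : Set ℝ) (k : ℕ) (x : ℝ) (b : Bool) :
    becCount A k (becT b x) ≤ becCount A (k + 1) x := by
  cases b <;> simp only [becCount] <;> omega

lemma becCount_one_sub (A : Set ℝ) (k : ℕ) (x : ℝ) :
    becCount A k (1 - x) = becCount ((1 - ·) ⁻¹' A) k x := by
  induction k generalizing x with
  | zero => rfl
  | succ k ih =>
    rw [becCount, becCount, becT_one_sub, becT_one_sub, ih, ih]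
    exact add_comm _ _

/-- `Q k` is the invariant with `k` steps still to go. -/
lemma becCount_eq_zero_of_invariant {A : Set ℝ} (Q : ℕ → ℝ → Prop)
    (hQ : ∀ k x b, Q (k + 1) x → Q k (becT b x)) (hA : ∀ x, Q 0 x → x ∉ A) {k : ℕ} {x : ℝ}
    (hx : Q k x) : becCount A k x = 0 := by
  induction k generalizing x with
  | zero => simp [becCount, hA x hx]
  | succ k ih => rw [becCount, ih (hQ k x false hx), ih (hQ k x true hx)]

lemma becCount_eq_zero_of_lt_pow {A : Set ℝ} {c : ℝ} (hA : A ⊆ Set.Iic c) {k : ℕ} {x : ℝ}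
    (hx : x ∈ Set.Icc (0:ℝ) 1) (hc : c < x ^ 2 ^ k) : becCount A k x = 0 := by
  refine becCount_eq_zero_of_invariant (fun k y => y ∈ Set.Icc (0:ℝ) 1 ∧ c < y ^ 2 ^ k)
    ?_ (fun y hy hyA => ?_) ⟨hx, hc⟩
  · rintro k y b ⟨hy, hcy⟩
    refine ⟨becT_mem_Icc hy b, hcy.trans_le ?_⟩
    calc y ^ 2 ^ (k + 1) = (y ^ 2) ^ 2 ^ k := by rw [pow_succ', pow_mul]
      _ ≤ becT b y ^ 2 ^ k := pow_le_pow_left₀ (sq_nonneg y) (sq_le_becT hy b) _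
  · have := Set.mem_Iic.mp (hA hyA)
    simp only [pow_zero, pow_one] at hy
    linarith [hy.2]

lemma becCount_eq_zero_of_two_pow_mul_lt {A : Set ℝ} {c : ℝ} (hA : A ⊆ Set.Ici c) {k : ℕ}
    {x : ℝ} (hx : x ∈ Set.Icc (0:ℝ) 1) (hc : 2 ^ k * x < c) : becCount A k x = 0 := by
  refine becCount_eq_zero_of_invariant (fun k y => y ∈ Set.Icc (0:ℝ) 1 ∧ 2 ^ k * y < c)
    ?_ (fun y hy hyA => ?_) ⟨hx, hc⟩
  · rintro k y b ⟨hy, hcy⟩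
    refine ⟨becT_mem_Icc hy b, lt_of_le_of_lt ?_ hcy⟩
    calc 2 ^ k * becT b y ≤ 2 ^ k * (2 * y) := by gcongr; exact becT_le_two_mul hy b
      _ = 2 ^ (k + 1) * y := by ring
  · have := Set.mem_Ici.mp (hA hyA)
    simp only [pow_zero, one_mul] at hy
    linarith [hy.2]

lemma becCount_le_mul_of_forall_becCount_eq_zero {A B : Set ℝ} {C : ℕ} (hC : 1 ≤ C)
    (h : ∀ k x, x ∈ Set.Icc (0:ℝ) 1 → becCount B k x = 0 → becCount A k x ≤ C) (k : ℕ)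
    {x : ℝ} (hx : x ∈ Set.Icc (0:ℝ) 1) :
    becCount A k x ≤ C * ((k + 1) * becCount B k x + 1) := by
  induction k generalizing x with
  | zero =>
    by_cases hB : becCount B 0 x = 0
    · simpa [hB] using h 0 x hx hB
    have := becCount_le A 0 x
    nlinarith
  | succ k ih =>
    by_cases hB : becCount B (k + 1) x = 0
    · simpa [hB] using h (k + 1) x hx hB
    have hB' : 1 ≤ becCount B k (becT false x) + becCount B k (becT true x) := by
      rw [becCount] at hB; omega
    calc becCount A (k + 1) x = becCount A k (becT false x) + becCount A k (becT true x) := rfl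
      _ ≤ C * ((k + 1) * becCount B k (becT false x) + 1) +
            C * ((k + 1) * becCount B k (becT true x) + 1) :=
          add_le_add (ih (becT_mem_Icc hx false)) (ih (becT_mem_Icc hx true))
      _ ≤ C * ((k + 1 + 1) * becCount B (k + 1) x + 1) := by
          rw [becCount, ← mul_add]
          exact Nat.mul_le_mul_left C (by nlinarith)

noncomputable def becZFin (z : ℝ) : (n : ℕ) → (Fin n → Bool) → ℝ
  | 0, _ => z
  | n + 1, b => becT (b (Fin.last n)) (becZFin z n (Fin.init b))

lemma becZ_eq_becZFin (z : ℝ) (n : ℕ) (ω : ℕ → Bool) :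
    becZ z n ω = becZFin z n (fun i => ω i) := by
  induction n with
  | zero => rfl
  | succ n ih => rw [becZ, ih]; rfl

open scoped Classical in
lemma card_becZFin_mem (A : Set ℝ) (n : ℕ) (z : ℝ) :
    #{b : Fin n → Bool | becZFin z n b ∈ A} = becCount A n z := by
  induction n generalizing A with
  | zero => simp [becZFin, becCount, apply_ite]
  | succ n ih =>
    rw [Finset.card_filter, ← (Fin.snocEquiv fun _ => Bool).sum_comp, Fintype.sum_prod_type,
      Fintype.sum_bool, becCount_succ', ← ih, ← ih, Finset.card_filter, Finset.card_filter]
    simp only [becZFin, Fin.snocEquiv, Equiv.coe_fn_mk, Fin.snoc_last, Fin.init_snoc,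
      Set.mem_preimage]
    rw [add_comm]

lemma measure_becZ_mem {μ : Measure (ℕ → Bool)} (hμ : IsBernoulliHalf μ) (A : Set ℝ) (n : ℕ)
    (z : ℝ) : μ {ω | becZ z n ω ∈ A} = becCount A n z * 2⁻¹ ^ n := by
  classical
  set restrict : (ℕ → Bool) → Fin n → Bool := fun ω i => ω i
  have hrestrict : Measurable restrict := measurable_pi_lambda _ fun i => measurable_pi_apply _
  have hset : {ω | becZ z n ω ∈ A} = restrict ⁻¹' ↑({b | becZFin z n b ∈ A} : Finset _) := by
    ext ω
    simp [restrict, becZ_eq_becZFin]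
  rw [hset, ← sum_measure_preimage_singleton _ fun b _ => hrestrict (measurableSet_singleton b)]
  have hcyl (b : Fin n → Bool) : restrict ⁻¹' {b} = {ω | ∀ i : Fin n, ω i = b i} := by
    ext ω
    simp [restrict, funext_iff]
  simp only [hcyl, hμ n, Finset.sum_const, nsmul_eq_mul, card_becZFin_mem]

lemma becCount_mid_pos {k : ℕ} {x : ℝ} (hx : x ∈ Set.Icc (1/4:ℝ) (3/4)) :
    0 < becCount (Set.Icc (1/4:ℝ) (3/4)) k x := by
  induction k generalizing x with
  | zero => rw [becCount, if_pos hx]; exact one_pos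
  | succ k ih =>
    obtain ⟨h1, h2⟩ := hx
    obtain ⟨b, hb⟩ : ∃ b, becT b x ∈ Set.Icc (1/4:ℝ) (3/4) := by
      rcases le_or_gt x (1/2) with h | h
      · exact ⟨false, by simp only [becT, Bool.false_eq_true, if_false]; constructor <;> nlinarith⟩
      · exact ⟨true, by simp only [becT, if_true]; constructor <;> nlinarith⟩
    exact (ih hb).trans_le (becCount_becT_le _ k x b)

lemma becCount_mid_pos_of_pow_le {k : ℕ} {x : ℝ} (hx : 3/4 < x) (hk : x ^ 2 ^ k ≤ 3/4) :
    0 < becCount (Set.Icc (1/4:ℝ) (3/4)) k x := by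
  induction k generalizing x with
  | zero => simp only [pow_zero, pow_one] at hk; linarith
  | succ k ih =>
    refine lt_of_lt_of_le ?_ (becCount_becT_le _ k x true)
    rw [show becT true x = x ^ 2 from if_pos rfl]
    rcases le_or_gt (x ^ 2) (3/4) with h | h
    · exact becCount_mid_pos ⟨by nlinarith, h⟩
    · exact ih h (by rwa [← pow_mul, ← pow_succ'])

lemma one_sub_pow_mul_one_add_mul_le_one {x : ℝ} (hx : x ∈ Set.Icc (0:ℝ) 1) (N : ℕ) :
    (1 - x) ^ N * (1 + N * x) ≤ 1 := by
  obtain ⟨h0, h1⟩ := hx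
  calc (1 - x) ^ N * (1 + N * x) ≤ (1 - x) ^ N * (1 + x) ^ N := by
        gcongr
        exact one_add_mul_le_pow (by linarith) N
    _ = (1 - x ^ 2) ^ N := by rw [← mul_pow]; ring
    _ ≤ 1 := pow_le_one₀ (by nlinarith) (by nlinarith)

lemma becCount_band_le_of_two_pow_mul_le (j : ℕ) {k : ℕ} {x : ℝ} (hx : x ∈ Set.Icc (0:ℝ) 1)
    (hk : 2 ^ k * x ≤ 1/3) : becCount (Set.Icc ((1/2:ℝ) ^ (j + 1)) ((1/2) ^ j)) k x ≤ 2 ^ j := by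
  induction k generalizing x with
  | zero => exact (becCount_le _ 0 x).trans Nat.one_le_two_pow
  | succ k ih =>
    rcases le_or_gt (k + 1) j with hkj | hjk
    · exact (becCount_le _ _ _).trans (Nat.pow_le_pow_right two_pos hkj)
    -- with more than `j` steps to go, a `t₁` step leaves the trajectory too small ever to reach
    -- the band, each later step at most doubling it
    have htrue : becCount (Set.Icc ((1/2:ℝ) ^ (j + 1)) ((1/2) ^ j)) k (becT true x) = 0 := by
      refine becCount_eq_zero_of_two_pow_mul_lt (fun y hy => hy.1) (becT_mem_Icc hx true) ?_
      rw [show becT true x = x ^ 2 from if_pos rfl]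
      calc (2:ℝ) ^ k * x ^ 2 < (1/2) ^ (k + 1) := by
            rw [one_div_pow, lt_div_iff₀ (by positivity),
              show (2:ℝ) ^ k * x ^ 2 * 2 ^ (k + 1) = (2 ^ (k + 1) * x) ^ 2 / 2 by ring]
            nlinarith [mul_le_mul hk hk (mul_nonneg (by positivity) hx.1) (by norm_num)]
        _ ≤ (1/2) ^ (j + 1) := pow_le_pow_of_le_one (by norm_num) (by norm_num) (by omega)
    have hfalse : becCount (Set.Icc ((1/2:ℝ) ^ (j + 1)) ((1/2) ^ j)) k (becT false x) ≤ 2 ^ j := by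
      refine ih (becT_mem_Icc hx false) ?_
      calc (2:ℝ) ^ k * becT false x ≤ 2 ^ k * (2 * x) := by gcongr; exact becT_le_two_mul hx false
        _ = 2 ^ (k + 1) * x := by ring
        _ ≤ 1/3 := hk
    rw [becCount]
    omega

lemma becCount_band_le_of_becCount_mid_eq_zero {j : ℕ} (hj : 1 ≤ j) {k : ℕ} {x : ℝ}
    (hx : x ∈ Set.Icc (0:ℝ) 1) (hM : becCount (Set.Icc (1/4:ℝ) (3/4)) k x = 0) :
    becCount (Set.Icc ((1/2:ℝ) ^ (j + 1)) ((1/2) ^ j)) k x ≤ 2 ^ j := by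
  rcases lt_or_ge (3/4) x with hx_gt | hx_le
  · have hpow : 3/4 < x ^ 2 ^ k :=
      not_le.mp fun h => (becCount_mid_pos_of_pow_le hx_gt h).ne' hM
    have hband : Set.Icc ((1/2:ℝ) ^ (j + 1)) ((1/2) ^ j) ⊆ Set.Iic (3/4) := fun y hy =>
      hy.2.trans <| (pow_le_of_le_one (by norm_num) (by norm_num) (by omega)).trans (by norm_num)
    rw [becCount_eq_zero_of_lt_pow hband hx hpow]
    exact Nat.zero_le _
  · have hx14 : x < 1/4 := not_le.mp fun h => (becCount_mid_pos ⟨h, hx_le⟩).ne' hM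
    have hM' : becCount (Set.Icc (1/4:ℝ) (3/4)) k (1 - x) = 0 := by
      rw [becCount_one_sub, Set.preimage_const_sub_Icc]
      norm_num [hM]
    have hpow : 3/4 < (1 - x) ^ 2 ^ k :=
      not_le.mp fun h => (becCount_mid_pos_of_pow_le (by linarith) h).ne' hM'
    refine becCount_band_le_of_two_pow_mul_le j hx ?_
    -- `(3/4) (1 + 2^k x) < (1 - x)^(2^k) (1 + 2^k x) ≤ 1`
    have := one_sub_pow_mul_one_add_mul_le_one hx (2 ^ k)
    push_cast at this
    nlinarith [mul_nonneg (pow_nonneg zero_le_two k) hx.1]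

lemma becCount_band_le {j : ℕ} (hj : 1 ≤ j) (k : ℕ) {x : ℝ} (hx : x ∈ Set.Icc (0:ℝ) 1) :
    becCount (Set.Icc ((1/2:ℝ) ^ (j + 1)) ((1/2) ^ j)) k x ≤
      2 ^ j * ((k + 1) * becCount (Set.Icc (1/4:ℝ) (3/4)) k x + 1) :=
  becCount_le_mul_of_forall_becCount_eq_zero Nat.one_le_two_pow
    (fun _ _ hx hM => becCount_band_le_of_becCount_mid_eq_zero hj hx hM) k hx

theorem stmt14_general (μ : Measure (ℕ → Bool)) (hμ : IsBernoulliHalf μ)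
    (z : ℝ) (hz : z ∈ Set.Icc (0:ℝ) 1) :
    ∀ n : ℕ, 1 ≤ n → ∀ j : ℕ, 1 ≤ j → j ≤ n →
      ((1:ℝ)/2) ^ j *
          (μ {ω | becZ z n ω ∈ Set.Icc (((1:ℝ)/2) ^ (j + 1)) (((1:ℝ)/2) ^ j)}).toReal ≤
        ((n : ℝ) + 1) * (μ {ω | becZ z n ω ∈ Set.Icc (1/4 : ℝ) (3/4)}).toReal +
          ((1:ℝ)/2) ^ n := by
  intro n _ j hj _
  have hcount : (becCount (Set.Icc ((1/2:ℝ) ^ (j + 1)) ((1/2) ^ j)) n z : ℝ) ≤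
      2 ^ j * ((n + 1) * becCount (Set.Icc (1/4:ℝ) (3/4)) n z + 1) := by
    exact_mod_cast becCount_band_le hj n hz
  simp only [measure_becZ_mem hμ, ENNReal.toReal_mul, ENNReal.toReal_natCast, ENNReal.toReal_pow,
    ENNReal.toReal_inv, ENNReal.toReal_ofNat]
  calc _ ≤ (1/2:ℝ) ^ j *
        (2 ^ j * ((n + 1) * becCount (Set.Icc (1/4:ℝ) (3/4)) n z + 1) * 2⁻¹ ^ n) := by gcongr
    _ = _ := by field_simp; rw [← mul_pow]; norm_num

theorem stmt14 (μ : Measure (ℕ → Bool)) [IsProbabilityMeasure μ] (hμ : IsBernoulliHalf μ)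
    (z : ℝ) (hz : z ∈ Set.Icc (0:ℝ) 1) :
    ∀ n : ℕ, 1 ≤ n → ∀ j : ℕ, 1 ≤ j → j ≤ n →
      ((1:ℝ)/2) ^ j *
          (μ {ω | becZ z n ω ∈ Set.Icc (((1:ℝ)/2) ^ (j + 1)) (((1:ℝ)/2) ^ j)}).toReal ≤
        ((n : ℝ) + 1) * (μ {ω | becZ z n ω ∈ Set.Icc (1/4 : ℝ) (3/4)}).toReal +
          ((1:ℝ)/2) ^ n :=
  stmt14_general μ hμ z hz
end
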